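/- Let w_1, ..., w_s be positive integer weights and let M_0, M_1, ..., M_r be a Hungarian sequence with r ≤ ⌈s/2⌉. Define Δ_i = wt(M_i) − wt(M_{i−1}) for 1 ≤ i ≤ r. Then Δ_1 ≤ Δ_2 ≤ ⋯ ≤ Δ_r. -/
import Mathlib


/-- A matching in the line graph with edges `e_1, …, e_s`: a subset of `{1, …, s}`
containing no two consecutive integers. -/
def IsMatching (s : ℕ) (M : Finset ℕ) : Prop :=
  M ⊆ Finset.Icc 1 s ∧ ∀ i ∈ M, i + 1 ∉ M

/-- The chain `{i, i+2, …, i+2(t-1)}` with `t` elements (empty when `t = 0`). -/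
def chainSet (i t : ℕ) : Finset ℕ :=
  (Finset.range t).image (fun j => i + 2 * j)

/-- The augmentation of the chain `chainSet i t`: for `t ≥ 1` it is
`{i-1, i+1, i+3, …, i+2(t-1)+1} ∩ {1, …, s}`; for the `i`-th empty chain (`t = 0`)
it is `{i}`. -/
def augSet (s i t : ℕ) : Finset ℕ :=
  if t = 0 then {i}
  else ((Finset.range (t + 1)).image (fun j => i - 1 + 2 * j)) ∩ Finset.Icc 1 s

/-- `chainSet i t` is a maximal chain of `M` (for `t = 0`, the `i`-th empty chain). -/
def IsMaximalChain (s : ℕ) (M : Finset ℕ) (i t : ℕ) : Prop :=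
  if t = 0 then
    i ∈ Finset.Icc 1 s ∧ (i - 1) ∉ M ∧ i ∉ M ∧ (i + 1) ∉ M
  else
    chainSet i t ⊆ M ∧ (i - 2) ∉ M ∧ (i + 2 * t) ∉ M

/-- `M'` is an augmentation of the matching `M`: it is a matching of the form
`(M ∖ C) ∪ Aug(C)` for some maximal chain `C` of `M` (possibly an empty chain),
with `|M'| = |M| + 1`. -/
def IsAugmentation (s : ℕ) (M M' : Finset ℕ) : Prop :=
  IsMatching s M' ∧ M'.card = M.card + 1 ∧
    ∃ i t, IsMaximalChain s M i t ∧ M' = (M \ chainSet i t) ∪ augSet s i t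

/-- The weight of a matching: the sum of the weights of its edges. -/
def wt (w : ℕ → ℕ) (M : Finset ℕ) : ℕ := ∑ i ∈ M, w i

/-- A Hungarian sequence `M 0, M 1, …, M r`: it starts with the empty matching, and
each `M i` (for `1 ≤ i ≤ r`) is an augmentation of `M (i-1)` of minimum weight among
all augmentations of `M (i-1)`. -/
def IsHungarianSeq (s : ℕ) (w : ℕ → ℕ) (r : ℕ) (M : ℕ → Finset ℕ) : Prop :=
  M 0 = ∅ ∧ ∀ i, 1 ≤ i → i ≤ r →
    IsAugmentation s (M (i - 1)) (M i) ∧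
    ∀ M' : Finset ℕ, IsAugmentation s (M (i - 1)) M' → wt w (M i) ≤ wt w M'

-- auxiliary lemmas

lemma mem_chainSet {x i t : ℕ} : x ∈ chainSet i t ↔ ∃ j, j < t ∧ x = i + 2 * j := by
  unfold chainSet
  simp only [Finset.mem_image, Finset.mem_range]
  constructor
  · rintro ⟨j, hj, rfl⟩; exact ⟨j, hj, rfl⟩
  · rintro ⟨j, hj, rfl⟩; exact ⟨j, hj, rfl⟩

lemma card_chainSet (i t : ℕ) : (chainSet i t).card = t := by
  unfold chainSet
  rw [Finset.card_image_of_injOn (fun a _ b _ h => by omega), Finset.card_range]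

def wtC (w : ℕ → ℕ) (i t : ℕ) : ℕ := ∑ j ∈ Finset.range t, w (i + 2 * j)

lemma wt_chainSet (w : ℕ → ℕ) (i t : ℕ) : wt w (chainSet i t) = wtC w i t := by
  unfold wt chainSet wtC
  rw [Finset.sum_image (fun a _ b _ h => by omega)]

lemma wtC_add (w : ℕ → ℕ) (i a b : ℕ) :
    wtC w i (a + b) = wtC w i a + wtC w (i + 2 * a) b := by
  unfold wtC
  rw [Finset.sum_range_add]
  congr 1
  apply Finset.sum_congr rfl
  intro j _
  congr 1
  omega

structure Good (s : ℕ) (A : Finset ℕ) (c p : ℕ) : Prop where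
  h1 : 1 ≤ c
  hs : c + 2 * p ≤ s
  sub : chainSet (c + 1) p ⊆ A
  nm1 : c - 1 ∉ A
  nN : ∀ j ≤ p, c + 2 * j ∉ A
  nm2 : c + 2 * p + 1 ∉ A

lemma good_disjoint {s : ℕ} {A : Finset ℕ} {c p : ℕ} (hG : Good s A c p) :
    Disjoint (A \ chainSet (c + 1) p) (chainSet c (p + 1)) := by
  rw [Finset.disjoint_left]
  intro x hx hx'
  obtain ⟨j, hj, rfl⟩ := mem_chainSet.1 hx'
  exact hG.nN j (by omega) (Finset.mem_sdiff.1 hx).1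

lemma wt_eq (w : ℕ → ℕ) {s : ℕ} {A : Finset ℕ} {c p : ℕ} (hG : Good s A c p) :
    wt w ((A \ chainSet (c + 1) p) ∪ chainSet c (p + 1)) + wtC w (c + 1) p
      = wt w A + wtC w c (p + 1) := by
  unfold wt
  rw [Finset.sum_union (good_disjoint hG)]
  have h1 : ∑ x ∈ A \ chainSet (c+1) p, w x + ∑ x ∈ chainSet (c+1) p, w x = ∑ x ∈ A, w x :=
    Finset.sum_sdiff hG.sub
  have h2 := wt_chainSet w (c+1) p
  have h3 := wt_chainSet w c (p+1)
  unfold wt at h2 h3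
  omega

-- Lemma A : structure of an augmentation
lemma lemA {s : ℕ} {A B : Finset ℕ} (h : IsAugmentation s A B) :
    ∃ c p, Good s A c p ∧ B = (A \ chainSet (c + 1) p) ∪ chainSet c (p + 1) := by
  obtain ⟨hBm, hcard, i, t, hmax, hBeq⟩ := h
  rcases Nat.eq_zero_or_pos t with rfl | ht
  · rw [IsMaximalChain, if_pos rfl] at hmax
    obtain ⟨hIcc, h1, h2, h3⟩ := hmax
    rw [Finset.mem_Icc] at hIcc
    refine ⟨i, 0, ⟨hIcc.1, by omega, ?_, h1, ?_, by simpa using h3⟩, ?_⟩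
    · intro x hx; exact absurd (mem_chainSet.1 hx) (by rintro ⟨j, hj, -⟩; omega)
    · intro j hj; have : j = 0 := by omega
      subst this; simpa using h2
    · rw [hBeq]
      have e1 : chainSet i 0 = ∅ := by
        ext x; simp [mem_chainSet]
      have e2 : chainSet (i+1) 0 = ∅ := by
        ext x; simp [mem_chainSet]
      have e3 : chainSet i 1 = {i} := by
        ext x; simp [mem_chainSet]
      have e4 : augSet s i 0 = {i} := by rw [augSet, if_pos rfl]
      rw [e1, e2, e3, e4]
  · rw [IsMaximalChain, if_neg (by omega)] at hmax
    obtain ⟨hsub, hm1, hm2⟩ := hmax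
    set Y := augSet s i t with hY
    have hYdef : Y = ((Finset.range (t + 1)).image (fun j => i - 1 + 2 * j)) ∩ Finset.Icc 1 s := by
      rw [hY, augSet, if_neg (by omega)]
    set S := (Finset.range (t + 1)).image (fun j => i - 1 + 2 * j) with hS
    have hcardC : (chainSet i t).card = t := card_chainSet i t
    have htA : t ≤ A.card := hcardC ▸ Finset.card_le_card hsub
    have hX : (A \ chainSet i t).card = A.card - t := by
      rw [Finset.card_sdiff_of_subset hsub, hcardC]
    have hkey : B.card + ((A \ chainSet i t) ∩ Y).card
        = (A \ chainSet i t).card + Y.card := by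
      rw [hBeq]; exact Finset.card_union_add_card_inter _ _
    have hYle : Y.card ≤ t + 1 := by
      calc Y.card ≤ S.card := by rw [hYdef]; exact Finset.card_le_card Finset.inter_subset_left
        _ ≤ (Finset.range (t+1)).card := Finset.card_image_le
        _ = t + 1 := Finset.card_range _
    have hinter0 : ((A \ chainSet i t) ∩ Y).card = 0 := by omega
    have hYcard : Y.card = t + 1 := by omega
    have hinter : (A \ chainSet i t) ∩ Y = ∅ := Finset.card_eq_zero.1 hinter0
    -- S ⊆ Icc 1 s
    have hScard : S.card ≤ t + 1 := le_trans Finset.card_image_le (le_of_eq (Finset.card_range _))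
    have hYS : Y ⊆ S := by rw [hYdef]; exact Finset.inter_subset_left
    have hYeqS : Y = S := Finset.eq_of_subset_of_card_le hYS (by omega)
    have hSIcc : S ⊆ Finset.Icc 1 s := by
      intro x hx
      have : x ∈ Y := hYeqS ▸ hx
      rw [hYdef] at this
      exact (Finset.mem_inter.1 this).2
    have hmemS : ∀ j, j ≤ t → i - 1 + 2 * j ∈ S := by
      intro j hj
      rw [hS]
      exact Finset.mem_image.2 ⟨j, Finset.mem_range.2 (by omega), rfl⟩
    have hi2 : 2 ≤ i := by
      have := hSIcc (hmemS 0 (by omega))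
      rw [Finset.mem_Icc] at this
      omega
    have his : i - 1 + 2 * t ≤ s := by
      have := hSIcc (hmemS t le_rfl)
      rw [Finset.mem_Icc] at this
      omega
    obtain ⟨c, rfl⟩ : ∃ c, i = c + 1 := ⟨i - 1, by omega⟩
    have hSchain : S = chainSet c (t + 1) := by
      ext x
      rw [hS, mem_chainSet]
      simp only [Finset.mem_image, Finset.mem_range]
      constructor
      · rintro ⟨j, hj, rfl⟩; exact ⟨j, by omega, by omega⟩
      · rintro ⟨j, hj, rfl⟩; exact ⟨j, by omega, by omega⟩
    have hm1' : c - 1 ∉ A := by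
      have h : c + 1 - 2 = c - 1 := by omega
      rwa [h] at hm1
    have hm2' : c + 2 * t + 1 ∉ A := by
      have h : c + 1 + 2 * t = c + 2 * t + 1 := by omega
      rwa [h] at hm2
    refine ⟨c, t, ⟨by omega, by omega, hsub, hm1', ?_, hm2'⟩, ?_⟩
    · intro j hj hA
      have hxS : c + 2 * j ∈ S := by
        have h0 := hmemS j hj
        have h : c + 1 - 1 + 2 * j = c + 2 * j := by omega
        rwa [h] at h0
      have hxC : c + 2 * j ∉ chainSet (c+1) t := by
        rw [mem_chainSet]; rintro ⟨k, hk, hke⟩; omega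
      have : c + 2 * j ∈ (A \ chainSet (c+1) t) ∩ Y := by
        rw [Finset.mem_inter, Finset.mem_sdiff, hYeqS]
        exact ⟨⟨hA, hxC⟩, hxS⟩
      rw [hinter] at this
      exact absurd this (Finset.notMem_empty _)
    · rw [hBeq, hYeqS, hSchain]

-- Lemma B : converse, every Good datum yields an augmentation
lemma lemB {s : ℕ} {A : Finset ℕ} {c p : ℕ} (hA : IsMatching s A) (hG : Good s A c p) :
    IsAugmentation s A ((A \ chainSet (c + 1) p) ∪ chainSet c (p + 1)) := by
  obtain ⟨hc1, hcs, hsub, hm1, hN, hm2⟩ := hG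
  have hG : Good s A c p := ⟨hc1, hcs, hsub, hm1, hN, hm2⟩
  have hdisj := good_disjoint hG
  have hNIcc : chainSet c (p + 1) ⊆ Finset.Icc 1 s := by
    intro x hx
    obtain ⟨j, hj, rfl⟩ := mem_chainSet.1 hx
    rw [Finset.mem_Icc]; omega
  refine ⟨⟨?_, ?_⟩, ?_, ?_⟩
  · exact Finset.union_subset ((Finset.sdiff_subset).trans hA.1) hNIcc
  · -- no two consecutive
    intro x hx hx1
    rcases Finset.mem_union.1 hx with hxa | hxn
    · rcases Finset.mem_union.1 hx1 with hya | hyn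
      · exact hA.2 x (Finset.mem_sdiff.1 hxa).1 (Finset.mem_sdiff.1 hya).1
      · obtain ⟨j, hj, hje⟩ := mem_chainSet.1 hyn
        obtain ⟨hxA, hxC⟩ := Finset.mem_sdiff.1 hxa
        rcases Nat.eq_zero_or_pos j with rfl | hj1
        · have : x = c - 1 := by omega
          exact hm1 (this ▸ hxA)
        · exact hxC (mem_chainSet.2 ⟨j - 1, by omega, by omega⟩)
    · obtain ⟨j, hj, rfl⟩ := mem_chainSet.1 hxn
      rcases Finset.mem_union.1 hx1 with hya | hyn
      · obtain ⟨hyA, hyC⟩ := Finset.mem_sdiff.1 hya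
        rcases Nat.lt_or_ge j p with hjp | hjp
        · exact hyC (mem_chainSet.2 ⟨j, by omega, by omega⟩)
        · have hje : c + 2 * j + 1 = c + 2 * p + 1 := by omega
          rw [hje] at hyA
          exact hm2 hyA
      · obtain ⟨k, hk, hke⟩ := mem_chainSet.1 hyn
        omega
  · -- cardinality
    rw [Finset.card_union_of_disjoint hdisj, Finset.card_sdiff_of_subset hsub,
      card_chainSet, card_chainSet]
    have : p ≤ A.card := by
      have := Finset.card_le_card hsub
      rwa [card_chainSet] at this
    omega
  · -- witness maximal chain
    rcases Nat.eq_zero_or_pos p with rfl | hp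
    · refine ⟨c, 0, ?_, ?_⟩
      · rw [IsMaximalChain, if_pos rfl]
        refine ⟨Finset.mem_Icc.2 ⟨hc1, by omega⟩, hm1, ?_, ?_⟩
        · have := hN 0 le_rfl; simpa using this
        · have := hm2; simpa using this
      · have e1 : chainSet c 0 = ∅ := by ext x; simp [mem_chainSet]
        have e2 : chainSet (c + 1) 0 = ∅ := by ext x; simp [mem_chainSet]
        have e3 : chainSet c 1 = {c} := by ext x; simp [mem_chainSet]
        have e4 : augSet s c 0 = {c} := by rw [augSet, if_pos rfl]
        rw [e1, e2, e3, e4]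
    · refine ⟨c + 1, p, ?_, ?_⟩
      · rw [IsMaximalChain, if_neg (by omega)]
        refine ⟨hsub, ?_, ?_⟩
        · have h : c + 1 - 2 = c - 1 := by omega
          rw [h]; exact hm1
        · have h : c + 1 + 2 * p = c + 2 * p + 1 := by omega
          rw [h]; exact hm2
      · have e : augSet s (c + 1) p = chainSet c (p + 1) := by
          rw [augSet, if_neg (by omega)]
          have e1 : Finset.image (fun j => c + 1 - 1 + 2 * j) (Finset.range (p + 1))
              = chainSet c (p + 1) := by
            ext x
            rw [mem_chainSet]
            simp only [Finset.mem_image, Finset.mem_range]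
            constructor
            · rintro ⟨j, hj, rfl⟩; exact ⟨j, by omega, by omega⟩
            · rintro ⟨j, hj, rfl⟩; exact ⟨j, by omega, by omega⟩
          rw [e1]
          exact Finset.inter_eq_left.2 hNIcc
        rw [e]


-- Main step lemma
lemma main_step {s : ℕ} (w : ℕ → ℕ) {A B B' : Finset ℕ}
    (hAmatch : IsMatching s A)
    (hAB : IsAugmentation s A B) (hBB' : IsAugmentation s B B')
    (minA : ∀ M', IsAugmentation s A M' → wt w B ≤ wt w M') :
    (wt w B : ℤ) - (wt w A : ℤ) ≤ (wt w B' : ℤ) - (wt w B : ℤ) := by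
  obtain ⟨c, p, hGc, hBeq⟩ := lemA hAB
  obtain ⟨d, q, hGd, hB'eq⟩ := lemA hBB'
  have hNB : chainSet c (p + 1) ⊆ B := by
    rw [hBeq]; exact Finset.subset_union_right
  have hAB_mem : ∀ x, x ∈ A → x ∉ chainSet (c + 1) p → x ∈ B := by
    intro x hx hnc
    rw [hBeq]; exact Finset.mem_union_left _ (Finset.mem_sdiff.2 ⟨hx, hnc⟩)
  have hBA : ∀ x, x ∈ B → x ∉ chainSet c (p + 1) → x ∈ A := by
    intro x hx hn
    rw [hBeq] at hx
    rcases Finset.mem_union.1 hx with h | h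
    · exact (Finset.mem_sdiff.1 h).1
    · exact absurd h hn
  have hnotB : ∀ x, x ∉ B → x ∈ A → x ∈ chainSet (c + 1) p := by
    intro x hxB hxA
    by_contra h
    exact hxB (hAB_mem x hxA h)
  have E1 : wt w B + wtC w (c + 1) p = wt w A + wtC w c (p + 1) := by
    rw [hBeq]; exact wt_eq w hGc
  have E2 : wt w B' + wtC w (d + 1) q = wt w B + wtC w d (q + 1) := by
    rw [hB'eq]; exact wt_eq w hGd
  by_cases hsep : ∀ j k, j < q → k ≤ p → d + 1 + 2 * j ≠ c + 2 * k
  · -- disjoint case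
    have hGnew : Good s A d q := by
      refine ⟨hGd.h1, hGd.hs, ?_, ?_, ?_, ?_⟩
      · intro x hx
        obtain ⟨j, hj, rfl⟩ := mem_chainSet.1 hx
        refine hBA _ (hGd.sub hx) ?_
        rw [mem_chainSet]; rintro ⟨k, hk, hke⟩
        exact hsep j k hj (by omega) hke
      · intro hA'
        have hmem := hnotB _ hGd.nm1 hA'
        obtain ⟨k, hk, hke⟩ := mem_chainSet.1 hmem
        have hd1 : 1 ≤ d := hGd.h1
        have hdN : d ∈ chainSet c (p + 1) := mem_chainSet.2 ⟨k + 1, by omega, by omega⟩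
        have hdB : d ∉ B := by simpa using hGd.nN 0 (Nat.zero_le _)
        exact hdB (hNB hdN)
      · intro j hj hA'
        have hmem := hnotB _ (hGd.nN j hj) hA'
        obtain ⟨k, hk, hke⟩ := mem_chainSet.1 hmem
        rcases Nat.eq_zero_or_pos j with rfl | hj1
        · rcases Nat.eq_zero_or_pos q with rfl | hq1
          · have hmem2 : d - 1 ∈ chainSet c (p + 1) :=
              mem_chainSet.2 ⟨k, by omega, by have := hGd.h1; omega⟩
            exact hGd.nm1 (hNB hmem2)
          · exact hsep 0 (k + 1) hq1 (by omega) (by omega)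
        · exact hsep (j - 1) k (by omega) (by omega) (by omega)
      · intro hA'
        have hmem := hnotB _ hGd.nm2 hA'
        obtain ⟨k, hk, hke⟩ := mem_chainSet.1 hmem
        have hmem2 : d + 2 * q ∈ chainSet c (p + 1) := mem_chainSet.2 ⟨k, by omega, by omega⟩
        exact hGd.nN q le_rfl (hNB hmem2)
    have hle := minA _ (lemB hAmatch hGnew)
    have E3 := wt_eq w hGnew
    omega
  · -- interacting case
    push_neg at hsep
    obtain ⟨j₀, k₀, hj₀, hk₀, heq₀⟩ := hsep
    have hq1 : 1 ≤ q := by omega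
    have hdc : d + 1 ≤ c := by
      by_contra hlt
      push_neg at hlt
      have hd1 : 1 ≤ d := hGd.h1
      have hmem : d - 1 ∈ chainSet c (p + 1) :=
        mem_chainSet.2 ⟨k₀ - j₀ - 1, by omega, by omega⟩
      exact hGd.nm1 (hNB hmem)
    obtain ⟨ℓ, hℓ⟩ : ∃ ℓ, c = d + 1 + 2 * ℓ := ⟨j₀ - k₀, by omega⟩
    have htop : c + 2 * p + 1 ≤ d + 2 * q := by
      by_contra hlt
      push_neg at hlt
      have hmem : d + 2 * q + 1 ∈ chainSet c (p + 1) :=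
        mem_chainSet.2 ⟨q - ℓ, by omega, by omega⟩
      exact hGd.nm2 (hNB hmem)
    obtain ⟨r', hr'⟩ : ∃ r', d + 2 * q = c + 2 * p + 1 + 2 * r' :=
      ⟨(d + 2 * q - c - 2 * p - 1) / 2, by omega⟩
    have hqsum : q = ℓ + p + 1 + r' := by omega
    have hGL : Good s A d ℓ := by
      refine ⟨hGd.h1, by have := hGc.hs; omega, ?_, ?_, ?_, ?_⟩
      · intro x hx
        obtain ⟨j, hj, rfl⟩ := mem_chainSet.1 hx
        have hxB : d + 1 + 2 * j ∈ B := hGd.sub (mem_chainSet.2 ⟨j, by omega, rfl⟩)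
        refine hBA _ hxB ?_
        rw [mem_chainSet]; rintro ⟨k, hk, hke⟩; omega
      · intro hA'
        have hmem := hnotB _ hGd.nm1 hA'
        obtain ⟨k, hk, hke⟩ := mem_chainSet.1 hmem
        have := hGd.h1; omega
      · intro j hj hA'
        have hmem := hnotB _ (hGd.nN j (by omega)) hA'
        obtain ⟨k, hk, hke⟩ := mem_chainSet.1 hmem
        omega
      · intro hA'
        have he : d + 2 * ℓ + 1 = c + 2 * 0 := by omega
        rw [he] at hA'
        exact hGc.nN 0 (Nat.zero_le _) hA'
    have hGR : Good s A (c + 2 * p + 1) r' := by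
      refine ⟨by omega, by have := hGd.hs; omega, ?_, ?_, ?_, ?_⟩
      · intro x hx
        obtain ⟨j, hj, rfl⟩ := mem_chainSet.1 hx
        have hxB : c + 2 * p + 1 + 1 + 2 * j ∈ B :=
          hGd.sub (mem_chainSet.2 ⟨ℓ + p + 1 + j, by omega, by omega⟩)
        refine hBA _ hxB ?_
        rw [mem_chainSet]; rintro ⟨k, hk, hke⟩; omega
      · intro hA'
        have he : c + 2 * p + 1 - 1 = c + 2 * p := by omega
        rw [he] at hA'
        exact hGc.nN p le_rfl hA'
      · intro j hj hA'
        have hnB := hGd.nN (ℓ + p + 1 + j) (by omega)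
        have he : d + 2 * (ℓ + p + 1 + j) = c + 2 * p + 1 + 2 * j := by omega
        rw [he] at hnB
        have hmem := hnotB _ hnB hA'
        obtain ⟨k, hk, hke⟩ := mem_chainSet.1 hmem
        omega
      · intro hA'
        have he : c + 2 * p + 1 + 2 * r' + 1 = d + 2 * q + 1 := by omega
        rw [he] at hA'
        have hmem := hnotB _ hGd.nm2 hA'
        obtain ⟨k, hk, hke⟩ := mem_chainSet.1 hmem
        omega
    have hleL := minA _ (lemB hAmatch hGL)
    have EL := wt_eq w hGL
    have hleR := minA _ (lemB hAmatch hGR)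
    have ER := wt_eq w hGR
    have S1 : wtC w d (q + 1)
        = wtC w d (ℓ + 1) + (wtC w (c + 1) p + wtC w (c + 2 * p + 1) (r' + 1)) := by
      have h1 : q + 1 = (ℓ + 1) + (p + (r' + 1)) := by omega
      have e1 : d + 2 * (ℓ + 1) = c + 1 := by omega
      have e2 : c + 1 + 2 * p = c + 2 * p + 1 := by omega
      rw [h1, wtC_add, e1, wtC_add w (c + 1) p (r' + 1), e2]
    have S2 : wtC w (d + 1) q
        = wtC w (d + 1) ℓ + (wtC w c (p + 1) + wtC w (c + 2 * p + 1 + 1) r') := by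
      have h1 : q = ℓ + ((p + 1) + r') := by omega
      have e1 : d + 1 + 2 * ℓ = c := by omega
      have e2 : c + 2 * (p + 1) = c + 2 * p + 1 + 1 := by omega
      rw [h1, wtC_add, e1, wtC_add w c (p + 1) r', e2]
    omega

/-- For positive weights `w_1, …, w_s` and a Hungarian sequence `M_0, …, M_r` with
`r ≤ ⌈s/2⌉`, the successive weight increments `Δ_i = wt(M_i) − wt(M_{i−1})` satisfy
`Δ_1 ≤ Δ_2 ≤ ⋯ ≤ Δ_r`. -/
theorem stmt_9 (s : ℕ) (w : ℕ → ℕ) (hw : ∀ i, 1 ≤ i → i ≤ s → 0 < w i)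
    (r : ℕ) (hr : r ≤ (s + 1) / 2) (M : ℕ → Finset ℕ)
    (hH : IsHungarianSeq s w r M)
    (i : ℕ) (h1 : 1 ≤ i) (h2 : i < r) :
    (wt w (M i) : ℤ) - (wt w (M (i - 1)) : ℤ) ≤
      (wt w (M (i + 1)) : ℤ) - (wt w (M i) : ℤ) := by
  obtain ⟨h0, hstep⟩ := hH
  have hAB := (hstep i h1 (le_of_lt h2)).1
  have minA := (hstep i h1 (le_of_lt h2)).2
  have hBB' := (hstep (i + 1) (by omega) (by omega)).1
  have hco : i + 1 - 1 = i := by omega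
  rw [hco] at hBB'
  have hAmatch : IsMatching s (M (i - 1)) := by
    rcases Nat.lt_or_ge i 2 with hi | hi
    · have : i = 1 := by omega
      subst this
      rw [show (1 : ℕ) - 1 = 0 from rfl, h0]
      exact ⟨by simp, by simp⟩
    · exact (hstep (i - 1) (by omega) (by omega)).1.1
  exact main_step w hAmatch hAB hBB' minA
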